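/- Let α, β, γ be real numbers with 0 ≤ γ < β < α < π, and set a = exp(iα), b = exp(iβ), c = exp(iγ). Then |c + a·b| < |a + b|. -/

import Mathlib

/-!
Since `‖exp (x i) + exp (y i)‖² = 2 + 2 cos (x - y)`, the claim reduces to
`cos (α + β - γ) < cos (α - β)`. The difference of these cosines is
`2 sin (α - γ/2) sin (β - γ/2)`, a product of sines of two angles in `(0, π)`.
-/

open Complex

lemma norm_exp_mul_I_add_exp_mul_I_sq (x y : ℝ) :
    ‖exp (x * I) + exp (y * I)‖ ^ 2 = 2 + 2 * Real.cos (x - y) := by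
  rw [Complex.sq_norm, exp_mul_I, exp_mul_I]
  simp only [normSq_apply, add_re, add_im, mul_re, mul_im, I_re, I_im, cos_ofReal_re,
    sin_ofReal_re, cos_ofReal_im, sin_ofReal_im, Real.cos_sub]
  nlinarith [Real.sin_sq_add_cos_sq x, Real.sin_sq_add_cos_sq y]

lemma Real.cos_add_sub_lt_cos_sub {α β γ : ℝ} (hα₀ : 0 < α - γ / 2) (hα : α - γ / 2 < Real.pi)
    (hβ₀ : 0 < β - γ / 2) (hβ : β - γ / 2 < Real.pi) :
    Real.cos (α + β - γ) < Real.cos (α - β) := by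
  have hdiff : Real.cos (α - β) - Real.cos (α + β - γ)
      = 2 * Real.sin (α - γ / 2) * Real.sin (β - γ / 2) := by
    have hsum : (α - β + (α + β - γ)) / 2 = α - γ / 2 := by ring
    have hdif : (α - β - (α + β - γ)) / 2 = -(β - γ / 2) := by ring
    rw [Real.cos_sub_cos, hsum, hdif, Real.sin_neg]
    ring
  have := mul_pos (Real.sin_pos_of_pos_of_lt_pi hα₀ hα) (Real.sin_pos_of_pos_of_lt_pi hβ₀ hβ)
  linarith

theorem abs_add_lt (α β γ : ℝ) (hγ : 0 ≤ γ) (hγβ : γ < β) (hβα : β < α)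
    (hα : α < Real.pi)
    (a b c : ℂ)
    (ha : a = Complex.exp (α * Complex.I))
    (hb : b = Complex.exp (β * Complex.I))
    (hc : c = Complex.exp (γ * Complex.I)) :
    ‖c + a * b‖ < ‖a + b‖ := by
  have hab : a * b = exp (↑(α + β) * I) := by
    rw [ha, hb, ← exp_add]
    push_cast
    ring_nf
  have hcos : Real.cos (α + β - γ) < Real.cos (α - β) :=
    Real.cos_add_sub_lt_cos_sub (by linarith) (by linarith) (by linarith) (by linarith)
  refine lt_of_pow_lt_pow_left₀ 2 (norm_nonneg _) ?_
  rw [add_comm c, hab, hc, ha, hb, norm_exp_mul_I_add_exp_mul_I_sq,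
    norm_exp_mul_I_add_exp_mul_I_sq]
  linarith
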